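/- Every filtered λ-ring structure R on ℤ[x]/(x³) is isomorphic either to a structure S((c_p)) of the form ψ_p(x) = c_p x² with c₂ ≡ 1 (mod 2) and c_p ≡ 0 (mod p) for all primes p > 2, or to a structure S((b_p), k) of the form ψ_p(x) = b_p x + (k·b_p(b_p − 1)/G) x², where (b_p) satisfies condition (A), G is the gcd of {b_p(b_p − 1) : p prime}, and k is an odd integer with 1 ≤ k ≤ G/2 divisible by every condition-(B) prime for (b_p). -/

import Mathlib

/-!
Write `ψ_p(x) = b_p x + c_p x²`. The congruence `ψ_p(x) ≡ x^p (mod p)` gives `p ∣ b_p`, `c_2` odd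
and `p ∣ c_p` for odd `p`, and comparing the `x²`-coefficients of `ψ_p ψ_q(x)` and `ψ_q ψ_p(x)`
gives `c_p b_q(b_q - 1) = c_q b_p(b_p - 1)`. If every `b_p` vanishes, `R` is already of the first
kind. Otherwise `b_2 ≠ 0`, and with `G` the gcd of the `b_p(b_p - 1)` the relation forces
`c_p = t · b_p(b_p - 1)/G` for a single odd `t`. Conjugating by `x ↦ ux + vx²` (`u = ±1`) replaces
`t` by `u(t - vG)`, which can be moved into `[1, G/2]`; the `2`-adic valuation of `b_2(b_2 - 1)`
yields condition (A), and at a condition-(B) prime `p` both `G` and `t` are divisible by `p`.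
-/

open Polynomial

noncomputable section

/-- The truncated polynomial ring `ℤ[x]/(xⁿ)`. -/
abbrev TP (n : ℕ) : Type := Polynomial ℤ ⧸ Ideal.span {(X : Polynomial ℤ) ^ n}

/-- The class of `x` in `ℤ[x]/(xⁿ)`. -/
def xx (n : ℕ) : TP n := Ideal.Quotient.mk _ (X : Polynomial ℤ)

/-- A filtered λ-ring structure on `ℤ[x]/(xⁿ)`, presented (via Wilkerson's theorem) as a
family of Adams operations `ψ p`, indexed by the primes `p`: each `ψ p` is a ring
endomorphism preserving the filtration ideal `(x)`, they pairwise commute, and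
`ψ p r ≡ r ^ p (mod p)`. -/
structure AdamsFamily (n : ℕ) : Type where
  ψ : Nat.Primes → (TP n →+* TP n)
  maps_ideal : ∀ (p : Nat.Primes), ∀ a ∈ Ideal.span {xx n}, ψ p a ∈ Ideal.span {xx n}
  comm : ∀ p q : Nat.Primes, (ψ p).comp (ψ q) = (ψ q).comp (ψ p)
  frob : ∀ (p : Nat.Primes) (a : TP n),
    ψ p a - a ^ (p : ℕ) ∈ Ideal.span {((p : ℕ) : TP n)}

/-- Isomorphism of filtered λ-ring structures on `ℤ[x]/(xⁿ)`: a filtration-preserving ring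
automorphism intertwining the Adams operations. -/
def AdamsIso {n : ℕ} (R S : AdamsFamily n) : Prop :=
  ∃ σ : TP n ≃+* TP n,
    (Ideal.span {xx n}).map σ.toRingHom = Ideal.span {xx n} ∧
    ∀ p : Nat.Primes, σ.toRingHom.comp (R.ψ p) = (S.ψ p).comp σ.toRingHom

/-- The prime 2 as an element of `Nat.Primes`. -/
def P2 : Nat.Primes := ⟨2, Nat.prime_two⟩

/-- The prime 3 as an element of `Nat.Primes`. -/
def P3 : Nat.Primes := ⟨3, Nat.prime_three⟩

/-- Condition (A) for a sequence of integers indexed by the primes. -/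
def CondA (b : Nat.Primes → ℤ) : Prop :=
  b P2 ≠ 0 ∧ (∀ p : Nat.Primes, ((p : ℕ) : ℤ) ∣ b p) ∧
    ∀ p : Nat.Primes, 2 < (p : ℕ) →
      (2 : ℤ) ^ padicValInt 2 (b P2) ∣ b p * (b p - 1)

/-- `p` is a condition-(B) prime for the sequence `b`. -/
def CondBPrime (b : Nat.Primes → ℤ) (p : Nat.Primes) : Prop :=
  2 < (p : ℕ) ∧ b p ≠ 0 ∧
    padicValInt (p : ℕ) (b p) =
      sInf {m : ℕ | ∃ q : Nat.Primes, b q ≠ 0 ∧ m = padicValInt (p : ℕ) (b q * (b q - 1))}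


lemma xx_pow_three : xx 3 ^ 3 = 0 := by
  rw [xx, ← map_pow, Ideal.Quotient.eq_zero_iff_mem]
  exact Ideal.subset_span rfl

lemma intCast_add_mul_xx_eq_mk (a b c : ℤ) :
    (a + b * xx 3 + c * xx 3 ^ 2 : TP 3) =
      Ideal.Quotient.mk _ (C a + C b * X + C c * X ^ 2) := by
  simp [xx]

lemma eq_of_intCast_add_mul_xx_eq {a b c a' b' c' : ℤ}
    (h : (a + b * xx 3 + c * xx 3 ^ 2 : TP 3) = a' + b' * xx 3 + c' * xx 3 ^ 2) :
    a = a' ∧ b = b' ∧ c = c' := by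
  rw [intCast_add_mul_xx_eq_mk, intCast_add_mul_xx_eq_mk, Ideal.Quotient.eq,
    Ideal.mem_span_singleton, X_pow_dvd_iff] at h
  have h0 := h 0 (by norm_num)
  have h1 := h 1 (by norm_num)
  have h2 := h 2 (by norm_num)
  simp only [coeff_sub, coeff_add, coeff_C_mul, coeff_C, coeff_X, coeff_X_pow] at h0 h1 h2
  norm_num at h0 h1 h2
  omega

lemma eq_of_mul_xx_add_eq {b c b' c' : ℤ}
    (h : (b * xx 3 + c * xx 3 ^ 2 : TP 3) = b' * xx 3 + c' * xx 3 ^ 2) : b = b' ∧ c = c' :=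
  (eq_of_intCast_add_mul_xx_eq (a := 0) (a' := 0) (by rw [Int.cast_zero, zero_add, zero_add, h])).2

lemma exists_eq_intCast_add_mul_xx (r : TP 3) :
    ∃ a b c : ℤ, r = a + b * xx 3 + c * xx 3 ^ 2 := by
  obtain ⟨f, rfl⟩ := Ideal.Quotient.mk_surjective r
  induction f using Polynomial.induction_on with
  | C a => exact ⟨a, 0, 0, by simp⟩
  | add f g hf hg =>
    obtain ⟨a, b, c, hf⟩ := hf
    obtain ⟨a', b', c', hg⟩ := hg
    exact ⟨a + a', b + b', c + c', by rw [map_add, hf, hg]; push_cast; ring⟩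
  | monomial n a ih =>
    obtain ⟨a₀, a₁, a₂, h⟩ := ih
    refine ⟨0, a₀, a₁, ?_⟩
    rw [show C a * X ^ (n + 1) = C a * X ^ n * X by ring, map_mul, h]
    change _ * xx 3 = _
    linear_combination (a₂ : TP 3) * xx_pow_three

lemma mem_span_xx_iff {r : TP 3} :
    r ∈ Ideal.span {xx 3} ↔ ∃ b c : ℤ, r = b * xx 3 + c * xx 3 ^ 2 := by
  rw [Ideal.mem_span_singleton']
  constructor
  · rintro ⟨s, rfl⟩
    obtain ⟨a, b, c, rfl⟩ := exists_eq_intCast_add_mul_xx s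
    exact ⟨a, b, by linear_combination (c : TP 3) * xx_pow_three⟩
  · rintro ⟨b, c, rfl⟩
    exact ⟨b + c * xx 3, by ring⟩

lemma mul_xx_add_mem_span_natCast_iff {n : ℕ} {b c : ℤ} :
    (b * xx 3 + c * xx 3 ^ 2 : TP 3) ∈ Ideal.span {(n : TP 3)} ↔
      (n : ℤ) ∣ b ∧ (n : ℤ) ∣ c := by
  rw [Ideal.mem_span_singleton']
  constructor
  · rintro ⟨s, hs⟩
    obtain ⟨a₀, a₁, a₂, rfl⟩ := exists_eq_intCast_add_mul_xx s
    obtain ⟨-, h₁, h₂⟩ := eq_of_intCast_add_mul_xx_eq (a := a₀ * n) (a' := 0)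
      (b := a₁ * n) (b' := b) (c := a₂ * n) (c' := c) (by push_cast; linear_combination hs)
    exact ⟨⟨a₁, by rw [← h₁, mul_comm]⟩, ⟨a₂, by rw [← h₂, mul_comm]⟩⟩
  · rintro ⟨⟨b, rfl⟩, ⟨c, rfl⟩⟩
    exact ⟨b * xx 3 + c * xx 3 ^ 2, by push_cast; ring⟩

lemma map_mul_xx_add (f : TP 3 →+* TP 3) {β γ : ℤ} (hf : f (xx 3) = β * xx 3 + γ * xx 3 ^ 2)
    (b c : ℤ) :
    f (b * xx 3 + c * xx 3 ^ 2) =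
      (b * β : ℤ) * xx 3 + (b * γ + c * β ^ 2 : ℤ) * xx 3 ^ 2 := by
  rw [map_add, map_mul, map_mul, map_pow, map_intCast, map_intCast, hf]
  push_cast
  linear_combination (c : TP 3) * (2 * β * γ + γ ^ 2 * xx 3) * xx_pow_three

lemma mul_xx_add_pow_three (b c : ℤ) : (b * xx 3 + c * xx 3 ^ 2 : TP 3) ^ 3 = 0 := by
  linear_combination ((b : TP 3) + c * xx 3) ^ 3 * xx_pow_three

namespace TP

variable {n : ℕ} {A : Type*} [CommRing A]

lemma ringHom_ext {f g : TP n →+* A} (h : f (xx n) = g (xx n)) : f = g :=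
  AdjoinRoot.ringHom_ext (RingHom.ext_int _ _) h

def lift (w : A) (hw : w ^ n = 0) : TP n →+* A :=
  AdjoinRoot.lift (Int.castRingHom A) w (by simpa using hw)

@[simp]
lemma lift_xx (w : A) (hw : w ^ n = 0) : lift w hw (xx n) = w :=
  AdjoinRoot.lift_root _

end TP

def substEquiv (u v : ℤ) (hu : u * u = 1) : TP 3 ≃+* TP 3 :=
  RingEquiv.ofRingHom (TP.lift _ (mul_xx_add_pow_three u v))
    (TP.lift _ (mul_xx_add_pow_three u (-(u * v))))
    (TP.ringHom_ext <| by
      rw [RingHom.comp_apply, TP.lift_xx, map_mul_xx_add _ (TP.lift_xx _ _), hu,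
        show u * v + -(u * v) * u ^ 2 = 0 by linear_combination (-(u * v)) * hu]
      simp)
    (TP.ringHom_ext <| by
      rw [RingHom.comp_apply, TP.lift_xx, map_mul_xx_add _ (TP.lift_xx _ _), hu,
        show u * -(u * v) + v * u ^ 2 = 0 by ring]
      simp)

lemma substEquiv_xx (u v : ℤ) (hu : u * u = 1) :
    substEquiv u v hu (xx 3) = u * xx 3 + v * xx 3 ^ 2 :=
  TP.lift_xx _ (mul_xx_add_pow_three u v)

lemma substEquiv_symm_xx (u v : ℤ) (hu : u * u = 1) :
    (substEquiv u v hu).symm (xx 3) = u * xx 3 + (-(u * v) : ℤ) * xx 3 ^ 2 :=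
  TP.lift_xx _ (mul_xx_add_pow_three u (-(u * v)))

lemma map_substEquiv_span_xx (u v : ℤ) (hu : u * u = 1) :
    (Ideal.span {xx 3}).map (substEquiv u v hu).toRingHom = Ideal.span {xx 3} := by
  have hunit : IsUnit ((u : TP 3) + v * xx 3) :=
    IsNilpotent.isUnit_add_left_of_commute ⟨3, by rw [mul_pow, xx_pow_three, mul_zero]⟩
      (IsUnit.of_mul_eq_one (u : TP 3) (by exact_mod_cast congrArg (Int.cast : ℤ → TP 3) hu))
      (Commute.all _ _)
  rw [Ideal.map_span, Set.image_singleton, RingEquiv.toRingHom_eq_coe, RingHom.coe_coe,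
    substEquiv_xx, show (u * xx 3 + v * xx 3 ^ 2 : TP 3) = xx 3 * (u + v * xx 3) by ring,
    Ideal.span_singleton_mul_right_unit hunit]

lemma substEquiv_conj_apply (f : TP 3 →+* TP 3) {u v b c : ℤ} (hu : u * u = 1)
    (hf : f (xx 3) = b * xx 3 + c * xx 3 ^ 2) :
    substEquiv u v hu (f ((substEquiv u v hu).symm (xx 3))) =
      b * xx 3 + (u * (c - v * (b * (b - 1))) : ℤ) * xx 3 ^ 2 := by
  rw [substEquiv_symm_xx, map_mul_xx_add f hf, ← RingEquiv.coe_toRingHom,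
    map_mul_xx_add _ (substEquiv_xx u v hu),
    show u * b * u = b by linear_combination b * hu,
    show u * b * v + (u * c + -(u * v) * b ^ 2) * u ^ 2 = u * (c - v * (b * (b - 1))) by
      linear_combination (u * c - u * v * b ^ 2) * hu]

namespace AdamsFamily

section Conjugation

variable {n : ℕ}

def conj (R : AdamsFamily n) (σ : TP n ≃+* TP n)
    (hσ : (Ideal.span {xx n}).map σ.toRingHom = Ideal.span {xx n}) : AdamsFamily n where
  ψ p := (σ.toRingHom.comp (R.ψ p)).comp σ.symm.toRingHom
  maps_ideal p a ha := by
    rw [← hσ, RingEquiv.toRingHom_eq_coe, Ideal.map_comap_of_equiv] at ha ⊢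
    simpa using R.maps_ideal p _ ha
  comm p q := by
    refine RingHom.ext fun a => ?_
    simpa using congrArg σ (RingHom.congr_fun (R.comm p q) (σ.symm a))
  frob p a := by
    have h := Ideal.mem_map_of_mem σ.toRingHom (R.frob p (σ.symm a))
    rw [Ideal.map_span, Set.image_singleton] at h
    simpa using h

lemma conj_ψ_apply (R : AdamsFamily n) (σ : TP n ≃+* TP n)
    (hσ : (Ideal.span {xx n}).map σ.toRingHom = Ideal.span {xx n}) (p : Nat.Primes) (a : TP n) :
    (R.conj σ hσ).ψ p a = σ (R.ψ p (σ.symm a)) :=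
  rfl

lemma adamsIso_conj (R : AdamsFamily n) (σ : TP n ≃+* TP n)
    (hσ : (Ideal.span {xx n}).map σ.toRingHom = Ideal.span {xx n}) : AdamsIso R (R.conj σ hσ) :=
  ⟨σ, hσ, fun p => RingHom.ext fun a => by simp [conj_ψ_apply]⟩

lemma adamsIso_refl (R : AdamsFamily n) : AdamsIso R R :=
  ⟨RingEquiv.refl _, by simp, fun p => RingHom.ext fun a => by simp⟩

end Conjugation

section Coefficients

variable (R : AdamsFamily 3)

lemma exists_coeff :
    ∃ b c : Nat.Primes → ℤ, ∀ p, R.ψ p (xx 3) = b p * xx 3 + c p * xx 3 ^ 2 := by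
  choose b c h using fun p =>
    mem_span_xx_iff.mp (R.maps_ideal p _ (Ideal.mem_span_singleton_self _))
  exact ⟨b, c, h⟩

variable {R} {p : Nat.Primes} {b c : ℤ}

lemma dvd_coeff_sub (hψ : R.ψ p (xx 3) = b * xx 3 + c * xx 3 ^ 2) {d : ℤ}
    (hx : xx 3 ^ (p : ℕ) = d * xx 3 ^ 2) :
    ((p : ℕ) : ℤ) ∣ b ∧ ((p : ℕ) : ℤ) ∣ c - d := by
  have h := R.frob p (xx 3)
  rw [hψ, hx, show (b * xx 3 + c * xx 3 ^ 2 - d * xx 3 ^ 2 : TP 3) =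
    b * xx 3 + (c - d : ℤ) * xx 3 ^ 2 by push_cast; ring] at h
  exact mul_xx_add_mem_span_natCast_iff.mp h

lemma two_dvd_coeff_and_odd (hψ : R.ψ P2 (xx 3) = b * xx 3 + c * xx 3 ^ 2) :
    2 ∣ b ∧ Odd c := by
  obtain ⟨hb, hc⟩ := dvd_coeff_sub hψ (d := 1) (by simp [P2])
  exact ⟨hb, by rw [Int.odd_iff]; simp [P2] at hc; omega⟩

lemma dvd_coeffs_of_two_lt (hp : 2 < (p : ℕ)) (hψ : R.ψ p (xx 3) = b * xx 3 + c * xx 3 ^ 2) :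
    ((p : ℕ) : ℤ) ∣ b ∧ ((p : ℕ) : ℤ) ∣ c := by
  simpa using dvd_coeff_sub hψ (d := 0) (by simp [pow_eq_zero_of_le hp xx_pow_three])

lemma dvd_coeff (hψ : R.ψ p (xx 3) = b * xx 3 + c * xx 3 ^ 2) : ((p : ℕ) : ℤ) ∣ b := by
  rcases p.2.two_le.eq_or_lt with h2 | h2
  · obtain rfl : p = P2 := Subtype.ext h2.symm
    exact_mod_cast (two_dvd_coeff_and_odd hψ).1
  · exact (dvd_coeffs_of_two_lt h2 hψ).1

lemma coeff_mul_eq_of_comm {q : Nat.Primes} {b' c' : ℤ}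
    (hp : R.ψ p (xx 3) = b * xx 3 + c * xx 3 ^ 2)
    (hq : R.ψ q (xx 3) = b' * xx 3 + c' * xx 3 ^ 2) :
    c * (b' * (b' - 1)) = c' * (b * (b - 1)) := by
  have h := RingHom.congr_fun (R.comm p q) (xx 3)
  rw [RingHom.comp_apply, RingHom.comp_apply, hq, hp, map_mul_xx_add _ hp,
    map_mul_xx_add _ hq] at h
  linear_combination -(eq_of_mul_xx_add_eq h).2

end Coefficients

end AdamsFamily

lemma exists_eq_mul_of_span_range_eq {ι : Type*} {f g m : ι → ℤ} {G : ℤ}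
    (hG : Ideal.span (Set.range f) = Ideal.span {G}) (hG0 : G ≠ 0) (hm : ∀ i, f i = G * m i)
    (h : ∀ i j, g i * f j = g j * f i) : ∃ t, ∀ i, g i = t * m i := by
  have hGmem : G ∈ Ideal.span (Set.range f) := hG ▸ Ideal.mem_span_singleton_self G
  obtain ⟨l, hl⟩ := Finsupp.mem_span_range_iff_exists_finsupp.mp hGmem
  refine ⟨l.sum fun i a => a * g i, fun j => mul_left_cancel₀ hG0 ?_⟩
  calc G * g j = l.sum fun i a => a * (g j * f i) := by
        rw [← hl, Finsupp.sum_mul]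
        exact Finsupp.sum_congr fun i _ => by rw [smul_eq_mul]; ring
    _ = (l.sum fun i a => a * g i) * f j := by
        rw [Finsupp.sum_mul]
        exact Finsupp.sum_congr fun i _ => by rw [← h]; ring
    _ = G * ((l.sum fun i a => a * g i) * m j) := by rw [hm]; ring

lemma exists_unit_mul_sub_mul_odd {t G : ℤ} (ht : Odd t) (hG : Even G) (hG0 : 0 < G) :
    ∃ u v : ℤ, u * u = 1 ∧ Odd (u * (t - G * v)) ∧ 1 ≤ u * (t - G * v) ∧
      2 * (u * (t - G * v)) ≤ G := by
  have hr : Odd (t - G * (t / G)) := ht.sub_even (hG.mul_right _)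
  have hr0 : 0 ≤ t - G * (t / G) := by rw [← Int.emod_def]; exact Int.emod_nonneg t hG0.ne'
  have hrG : t - G * (t / G) < G := by rw [← Int.emod_def]; exact Int.emod_lt_of_pos t hG0
  have hr1 : 1 ≤ t - G * (t / G) := by
    rcases hr with ⟨s, hs⟩
    omega
  by_cases h2r : 2 * (t - G * (t / G)) ≤ G
  · exact ⟨1, t / G, by norm_num, by rwa [one_mul], by rwa [one_mul], by rwa [one_mul]⟩
  · refine ⟨-1, t / G + 1, by norm_num, ?_, by linarith, by linarith⟩
    rw [show -1 * (t - G * (t / G + 1)) = G - (t - G * (t / G)) by ring]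
    exact hG.sub_odd hr

lemma apply_two_ne_zero_of_ne_zero {b c : Nat.Primes → ℤ}
    (hb : ∀ p : Nat.Primes, ((p : ℕ) : ℤ) ∣ b p) (hc2 : Odd (c P2))
    (hcomm : ∀ p q, c p * (b q * (b q - 1)) = c q * (b p * (b p - 1)))
    {p : Nat.Primes} (hp : b p ≠ 0) : b P2 ≠ 0 := by
  intro h2
  have h := hcomm P2 p
  rw [h2, zero_mul, mul_zero, mul_eq_zero, mul_eq_zero, sub_eq_zero] at h
  obtain h | h | h := h
  · simp [h] at hc2
  · exact hp h
  · have := Int.eq_one_of_dvd_one (by positivity) (h ▸ hb p)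
    exact p.2.one_lt.ne' (by exact_mod_cast this)

lemma CondBPrime.dvd_and_not_dvd {b : Nat.Primes → ℤ} {p : Nat.Primes} (hB : CondBPrime b p)
    (hbp : ((p : ℕ) : ℤ) ∣ b p) {G m : ℤ}
    (hG : Ideal.span (Set.range fun q : Nat.Primes => b q * (b q - 1)) = Ideal.span {G})
    (hm : b p * (b p - 1) = G * m) : ((p : ℕ) : ℤ) ∣ G ∧ ¬((p : ℕ) : ℤ) ∣ m := by
  obtain ⟨-, hb0, hval⟩ := hB
  have hp1 := p.2.ne_one
  have hpZ : Prime ((p : ℕ) : ℤ) := Nat.prime_iff_prime_int.mp p.2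
  set e := padicValInt p (b p)
  have he : 1 ≤ e :=
    ((padicValInt_dvd_iff_of_ne_one hp1 1 _).mp (by rwa [pow_one])).resolve_left hb0
  -- minimality of `e` makes `p ^ e` divide every generator `b q * (b q - 1)`
  have hpeG : ((p : ℕ) : ℤ) ^ e ∣ G := by
    have hle : Ideal.span (Set.range fun q : Nat.Primes => b q * (b q - 1)) ≤
        Ideal.span {((p : ℕ) : ℤ) ^ e} := by
      rw [Ideal.span_le]
      rintro _ ⟨q, rfl⟩
      by_cases hq : b q = 0
      · simp [hq]
      · refine Ideal.mem_span_singleton.mpr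
          ((padicValInt_dvd_iff_of_ne_one hp1 _ _).mpr (Or.inr ?_))
        rw [hval]
        exact Nat.sInf_le ⟨q, hq, rfl⟩
    exact Ideal.mem_span_singleton.mp (hle (hG ▸ Ideal.mem_span_singleton_self G))
  refine ⟨dvd_trans (by simpa using pow_dvd_pow ((p : ℕ) : ℤ) he) hpeG, fun hpm => ?_⟩
  have hpb1 : ¬((p : ℕ) : ℤ) ∣ b p - 1 := fun h =>
    hpZ.not_dvd_one (by simpa using dvd_sub hbp h)
  have hpow : ((p : ℕ) : ℤ) ^ (e + 1) ∣ b p :=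
    hpZ.pow_dvd_of_dvd_mul_right _ hpb1 (by rw [hm, pow_succ]; exact mul_dvd_mul hpeG hpm)
  have := ((padicValInt_dvd_iff_of_ne_one hp1 _ _).mp hpow).resolve_left hb0
  omega

lemma pow_padicValInt_dvd_of_not_dvd {p : ℕ} (hp : p.Prime) {b G m : ℤ}
    (hm : b * (b - 1) = G * m) (hpm : ¬(p : ℤ) ∣ m) : (p : ℤ) ^ padicValInt p b ∣ G :=
  (Nat.prime_iff_prime_int.mp hp).pow_dvd_of_dvd_mul_right _ hpm
    (hm ▸ (padicValInt_dvd b).mul_right _)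

/-- `u * (c p - v * (b p * (b p - 1)))` is the `x²`-coefficient of `ψ_p` after conjugation by
`substEquiv u v`. -/
theorem exists_normalization {b c : Nat.Primes → ℤ} {G : ℤ}
    (hb : ∀ p : Nat.Primes, ((p : ℕ) : ℤ) ∣ b p) (hc2 : Odd (c P2))
    (hc : ∀ p : Nat.Primes, 2 < (p : ℕ) → ((p : ℕ) : ℤ) ∣ c p)
    (hcomm : ∀ p q, c p * (b q * (b q - 1)) = c q * (b p * (b p - 1))) (hb2 : b P2 ≠ 0)
    (hG : Ideal.span (Set.range fun p : Nat.Primes => b p * (b p - 1)) = Ideal.span {G})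
    (hG0 : 0 ≤ G) :
    CondA b ∧ ∃ k u v : ℤ, u * u = 1 ∧ Odd k ∧ 1 ≤ k ∧ 2 * k ≤ G ∧
      (∀ p, CondBPrime b p → ((p : ℕ) : ℤ) ∣ k) ∧
      ∀ p, u * (c p - v * (b p * (b p - 1))) = k * (b p * (b p - 1)) / G := by
  choose m hm using fun p => Ideal.mem_span_singleton.mp
    (hG ▸ Ideal.subset_span ⟨p, rfl⟩ : b p * (b p - 1) ∈ Ideal.span {G})
  have h2b : (2 : ℤ) ∣ b P2 := hb P2
  have hGne : G ≠ 0 := by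
    rintro rfl
    have h := hm P2
    rw [zero_mul, mul_eq_zero, sub_eq_zero] at h
    omega
  obtain ⟨t, ht⟩ := exists_eq_mul_of_span_range_eq hG hGne hm hcomm
  obtain ⟨htodd, hm2⟩ := Int.odd_mul.mp (ht P2 ▸ hc2)
  have h2G : (2 : ℤ) ^ padicValInt 2 (b P2) ∣ G := by
    exact_mod_cast pow_padicValInt_dvd_of_not_dvd Nat.prime_two (hm P2)
      (by rwa [Nat.cast_two, ← even_iff_two_dvd, Int.not_even_iff_odd])
  have hGeven : Even G := by
    have hv := ((padicValInt_dvd_iff_of_ne_one (p := 2) (by norm_num) 1 _).mp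
      (by simpa using h2b)).resolve_left hb2
    exact even_iff_two_dvd.mpr ((dvd_pow_self 2 (by omega)).trans h2G)
  refine ⟨⟨hb2, hb, fun p _ => h2G.trans ⟨m p, hm p⟩⟩, ?_⟩
  obtain ⟨u, v, hu, hk, hk1, hk2⟩ :=
    exists_unit_mul_sub_mul_odd htodd hGeven (lt_of_le_of_ne hG0 (Ne.symm hGne))
  refine ⟨_, u, v, hu, hk, hk1, hk2, fun p hp => ?_, fun p => ?_⟩
  · obtain ⟨hpG, hpm⟩ := hp.dvd_and_not_dvd (hb p) hG (hm p)
    have hpt : ((p : ℕ) : ℤ) ∣ t :=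
      ((Nat.prime_iff_prime_int.mp p.2).dvd_or_dvd (ht p ▸ hc p hp.1)).resolve_right hpm
    exact (dvd_sub hpt (hpG.mul_right v)).mul_left u
  · rw [hm p, ht p,
      show u * (t - G * v) * (G * m p) = G * (u * (t * m p - v * (G * m p))) by ring,
      Int.mul_ediv_cancel_left _ hGne]

theorem stmt7 (R : AdamsFamily 3) :
    (∃ (S : AdamsFamily 3) (c : Nat.Primes → ℤ),
      Int.ModEq 2 (c P2) 1 ∧ (∀ p : Nat.Primes, 2 < (p : ℕ) → ((p : ℕ) : ℤ) ∣ c p) ∧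
      (∀ p : Nat.Primes, S.ψ p (xx 3) = (c p : TP 3) * xx 3 ^ 2) ∧ AdamsIso R S) ∨
    (∃ (S : AdamsFamily 3) (b : Nat.Primes → ℤ) (k G : ℤ),
      CondA b ∧
      Ideal.span (Set.range fun p : Nat.Primes => b p * (b p - 1)) = Ideal.span {G} ∧
      0 ≤ G ∧ Odd k ∧ 1 ≤ k ∧ 2 * k ≤ G ∧
      (∀ p : Nat.Primes, CondBPrime b p → ((p : ℕ) : ℤ) ∣ k) ∧
      (∀ p : Nat.Primes, S.ψ p (xx 3) =
          (b p : TP 3) * xx 3 + ((k * (b p * (b p - 1)) / G : ℤ) : TP 3) * xx 3 ^ 2) ∧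
      AdamsIso R S) := by
  obtain ⟨b, c, hψ⟩ := R.exists_coeff
  have hb p := AdamsFamily.dvd_coeff (hψ p)
  have hc2 := (AdamsFamily.two_dvd_coeff_and_odd (hψ P2)).2
  have hc (p : Nat.Primes) (hp : 2 < (p : ℕ)) := (AdamsFamily.dvd_coeffs_of_two_lt hp (hψ p)).2
  have hcomm p q := AdamsFamily.coeff_mul_eq_of_comm (hψ p) (hψ q)
  by_cases h0 : ∀ p, b p = 0
  · refine Or.inl ⟨R, c, Int.odd_iff.mp hc2, hc, fun p => ?_, R.adamsIso_refl⟩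
    simp [hψ p, h0 p]
  obtain ⟨p, hp⟩ := not_forall.mp h0
  obtain ⟨g, hg⟩ := IsPrincipalIdealRing.principal
    (Ideal.span (Set.range fun p : Nat.Primes => b p * (b p - 1)))
  have hG := hg.trans (Int.span_natAbs g).symm
  obtain ⟨hA, k, u, v, hu, hk, hk1, hk2, hB, hcoeff⟩ := exists_normalization hb hc2 hc hcomm
    (apply_two_ne_zero_of_ne_zero hb hc2 hcomm hp) hG (Int.natCast_nonneg _)
  refine Or.inr ⟨R.conj _ (map_substEquiv_span_xx u v hu), b, k, _, hA, hG,
    Int.natCast_nonneg _, hk, hk1, hk2, hB, fun p => ?_, R.adamsIso_conj _ _⟩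
  rw [AdamsFamily.conj_ψ_apply, substEquiv_conj_apply _ hu (hψ p), hcoeff]
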